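/- arXiv:1612.00549 — 5 statements merged into one kernel-verified Lean document; each statement's English description precedes it below -/
import Mathlib

section
/- Let R be an (L+1)×(L+1) symmetric positive definite matrix and d ∈ ℝ^{L+1} nonzero, and let R_Ω, d_Ω be the principal submatrix and subvector corresponding to a proper nonempty subset Ω of indices. Then 1/(dᵀR⁻¹d) ≤ 1/(d_Ωᵀ R_Ω⁻¹ d_Ω); i.e., the CEM output energy with full bands is at most that with partial bands, provided d_Ω ≠ 0. -/
/-!
For positive definite `R`, the form `d ⬝ᵥ R⁻¹ *ᵥ d` is the maximum of
`2 (x ⬝ᵥ d) - x ⬝ᵥ R *ᵥ x` over all `x`, attained at `x = R⁻¹ *ᵥ d`. The same quantity for the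
principal submatrix on `Ω` is the maximum over the vectors supported on `Ω` only, hence it is
smaller; inverting reverses the inequality.
-/

open Matrix Function

variable {m n : Type*} [Fintype m] [Fintype n]

theorem Function.Injective.extend_zero_dotProduct {R : Type*} [NonUnitalNonAssocSemiring R]
    {e : m → n} (he : Injective e) (z : m → R) (f : n → R) :
    extend e z 0 ⬝ᵥ f = z ⬝ᵥ (f ∘ e) :=
  (Fintype.sum_of_injective e he _ _
    (fun i hi => by simp [extend_apply' _ _ _ (by simpa using hi)])
    (fun j => by simp [he.extend_apply])).symm

theorem Function.Injective.extend_zero_dotProduct_mulVec {R : Type*} [CommSemiring R]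
    {e : m → n} (he : Injective e) (A : Matrix n n R) (z : m → R) :
    extend e z 0 ⬝ᵥ A *ᵥ extend e z 0 = z ⬝ᵥ A.submatrix e e *ᵥ z := by
  rw [he.extend_zero_dotProduct]
  congr 1
  funext j
  simp only [Function.comp_apply, mulVec, dotProduct_comm (A (e j)),
    he.extend_zero_dotProduct]
  exact dotProduct_comm _ _

namespace Matrix.PosDef

variable [DecidableEq m] [DecidableEq n]

theorem two_mul_dotProduct_sub_le_dotProduct_inv_mulVec {R : Matrix n n ℝ} (hR : R.PosDef)
    (x d : n → ℝ) : 2 * (x ⬝ᵥ d) - x ⬝ᵥ R *ᵥ x ≤ d ⬝ᵥ R⁻¹ *ᵥ d := by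
  set w := R⁻¹ *ᵥ d
  have hRw : R *ᵥ w = d := by
    rw [mulVec_mulVec, mul_nonsing_inv _ hR.det_pos.ne'.isUnit, one_mulVec]
  have hwR : w ᵥ* R = d := by
    rw [← mulVec_transpose, (isHermitian_iff_isSymm.mp hR.isHermitian).eq, hRw]
  have hsq := hR.posSemidef.dotProduct_mulVec_nonneg (x - w)
  rw [star_trivial, mulVec_sub, dotProduct_sub, sub_dotProduct, sub_dotProduct, hRw,
    dotProduct_mulVec w, hwR, dotProduct_comm w d, dotProduct_comm d x] at hsq
  linarith

theorem dotProduct_inv_submatrix_mulVec_le {R : Matrix n n ℝ} (hR : R.PosDef) {e : m → n}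
    (he : Injective e) (d : n → ℝ) :
    (d ∘ e) ⬝ᵥ (R.submatrix e e)⁻¹ *ᵥ (d ∘ e) ≤ d ⬝ᵥ R⁻¹ *ᵥ d := by
  set M := R.submatrix e e
  set z := M⁻¹ *ᵥ (d ∘ e)
  have hMz : M *ᵥ z = d ∘ e := by
    rw [mulVec_mulVec, mul_nonsing_inv _ (hR.submatrix he).det_pos.ne'.isUnit, one_mulVec]
  calc (d ∘ e) ⬝ᵥ z = 2 * (extend e z 0 ⬝ᵥ d) - extend e z 0 ⬝ᵥ R *ᵥ extend e z 0 := by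
        rw [he.extend_zero_dotProduct, he.extend_zero_dotProduct_mulVec, hMz,
          dotProduct_comm z]
        ring
    _ ≤ d ⬝ᵥ R⁻¹ *ᵥ d := hR.two_mul_dotProduct_sub_le_dotProduct_inv_mulVec _ d

end Matrix.PosDef

theorem cem_more_bands_better_general {L : ℕ} (R : Matrix (Fin (L + 1)) (Fin (L + 1)) ℝ)
    (d : Fin (L + 1) → ℝ) (hR : R.PosDef)
    (Ω : Finset (Fin (L + 1)))
    (hdΩ : (fun i : Ω => d i) ≠ 0) :
    (d ⬝ᵥ R⁻¹ *ᵥ d)⁻¹ ≤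
      ((fun i : Ω => d i) ⬝ᵥ
        (R.submatrix (fun i : Ω => (i : Fin (L + 1))) (fun i : Ω => (i : Fin (L + 1))))⁻¹ *ᵥ
        (fun i : Ω => d i))⁻¹ := by
  have hpos := (hR.submatrix Subtype.val_injective).inv.dotProduct_mulVec_pos hdΩ
  rw [star_trivial] at hpos
  exact inv_anti₀ hpos (hR.dotProduct_inv_submatrix_mulVec_le Subtype.val_injective d)

theorem cem_more_bands_better {L : ℕ} (R : Matrix (Fin (L + 1)) (Fin (L + 1)) ℝ)
    (d : Fin (L + 1) → ℝ) (hR : R.PosDef) (hd : d ≠ 0)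
    (Ω : Finset (Fin (L + 1))) (hΩne : Ω.Nonempty) (hΩproper : Ω ≠ Finset.univ)
    (hdΩ : (fun i : Ω => d i) ≠ 0) :
    (d ⬝ᵥ R⁻¹ *ᵥ d)⁻¹ ≤
      ((fun i : Ω => d i) ⬝ᵥ
        (R.submatrix (fun i : Ω => (i : Fin (L + 1))) (fun i : Ω => (i : Fin (L + 1))))⁻¹ *ᵥ
        (fun i : Ω => d i))⁻¹ :=
  cem_more_bands_better_general R d hR Ω hdΩ
end

section
/- With R̃ = [[R, m],[mᵀ, 1]] invertible (R symmetric positive definite, 1 - mᵀR⁻¹m ≠ 0) and d̃ = (d, 1), the vector R̃⁻¹d̃ equals (R⁻¹d + b₁(b₂-1)R⁻¹m, -b₁(b₂-1)) where b₁ = 1/(1 - mᵀR⁻¹m) and b₂ = mᵀR⁻¹d. -/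
/-!
Solve the bordered system `R x + y m = d`, `mᵀ x + y = 1` by elimination: the first block row
gives `x = R⁻¹ d - y R⁻¹ m`, and substituting into the second leaves the scalar equation
`(1 - mᵀ R⁻¹ m) y = 1 - mᵀ R⁻¹ d`, whose coefficient is the Schur complement of `R`.
-/

open Matrix

namespace Matrix

theorem fromBlocks_col_row_one_mulVec {α n : Type*} [CommSemiring α] [Fintype n]
    (R : Matrix n n α) (m x : n → α) (a : α) :
    fromBlocks R (fun i (_ : Fin 1) => m i) (fun (_ : Fin 1) j => m j) 1 *ᵥ
        Sum.elim x (fun _ => a) =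
      Sum.elim (R *ᵥ x + a • m) (fun _ => m ⬝ᵥ x + a) := by
  ext (i | i) <;>
    simp [mulVec, dotProduct, fromBlocks, Fintype.sum_sum_type, mul_comm, Fin.fin_one_eq_zero]

theorem fromBlocks_col_row_one_mulVec_eq {K n : Type*} [Field K] [Fintype n] [DecidableEq n]
    (R : Matrix n n K) (hR : IsUnit R.det) (m d : n → K) (e c : K)
    (hc : (1 - m ⬝ᵥ R⁻¹ *ᵥ m) * c = m ⬝ᵥ R⁻¹ *ᵥ d - e) :
    fromBlocks R (fun i (_ : Fin 1) => m i) (fun (_ : Fin 1) j => m j) 1 *ᵥ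
        Sum.elim (R⁻¹ *ᵥ d + c • (R⁻¹ *ᵥ m)) (fun _ => -c) =
      Sum.elim d (fun _ => e) := by
  rw [fromBlocks_col_row_one_mulVec, mulVec_add, mulVec_smul, mulVec_mulVec, mulVec_mulVec,
    mul_nonsing_inv _ hR, one_mulVec, one_mulVec, dotProduct_add, dotProduct_smul, smul_eq_mul]
  congr 1
  · module
  · ext
    linear_combination -hc

end Matrix

theorem acem_direction_identity {L : ℕ} (R : Matrix (Fin L) (Fin L) ℝ)
    (m d : Fin L → ℝ) (hR : R.PosDef)
    (h1 : 1 - m ⬝ᵥ R⁻¹ *ᵥ m ≠ 0)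
    (hRt : IsUnit (fromBlocks R (fun i (_ : Fin 1) => m i) (fun (_ : Fin 1) j => m j) 1).det) :
    (fromBlocks R (fun i (_ : Fin 1) => m i) (fun (_ : Fin 1) j => m j) 1)⁻¹ *ᵥ
        Sum.elim d 1 =
      Sum.elim
        (R⁻¹ *ᵥ d + ((1 - m ⬝ᵥ R⁻¹ *ᵥ m)⁻¹ * (m ⬝ᵥ R⁻¹ *ᵥ d - 1)) • (R⁻¹ *ᵥ m))
        (fun _ => -((1 - m ⬝ᵥ R⁻¹ *ᵥ m)⁻¹ * (m ⬝ᵥ R⁻¹ *ᵥ d - 1))) := by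
  let _ := invertibleOfIsUnitDet _ hRt
  exact inv_mulVec_eq_vec (fromBlocks_col_row_one_mulVec_eq R hR.det_pos.ne'.isUnit m d 1 _
    (mul_inv_cancel_left₀ h1 _)).symm
end

section
/- The first L components of the augmented-CEM detector w_ACEM = R̃⁻¹d̃/(d̃ᵀR̃⁻¹d̃) are a positive scalar multiple of the MF detector w_MF = K⁻¹(d-m)/((d-m)ᵀK⁻¹(d-m)), i.e. w_ACEM(1:L) = c·w_MF with c = c_ACEM/c_MF, provided both normalizing denominators are nonzero. -/
/-!
Inverting `R̃ = [[R, m], [mᵀ, 1]]` blockwise with respect to its corner `1`, whose Schur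
complement is `K = R - m mᵀ`, the first `L` components of `R̃⁻¹ d̃` are `K⁻¹ (d - m)`. Hence the
unnormalized ACEM and MF detectors agree on those components, and the normalized ones differ only
by the ratio of their normalizing constants.
-/

open Matrix

namespace Matrix

variable {m n α : Type*} [Fintype m] [Fintype n] [DecidableEq m] [DecidableEq n] [CommRing α]

theorem inv_fromBlocks₂₂_mulVec_inl (A : Matrix m m α) (B : Matrix m n α) (C : Matrix n m α)
    (D : Matrix n n α) [Invertible D] [Invertible (A - B * ⅟D * C)] (x : m → α) (y : n → α)
    (i : m) :
    ((fromBlocks A B C D)⁻¹ *ᵥ Sum.elim x y) (Sum.inl i) =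
      ((A - B * ⅟D * C)⁻¹ *ᵥ (x - B *ᵥ ⅟D *ᵥ y)) i := by
  let := fromBlocks₂₂Invertible A B C D
  rw [← invOf_eq_nonsing_inv, invOf_fromBlocks₂₂_eq, ← invOf_eq_nonsing_inv, fromBlocks_mulVec]
  simp [sub_eq_add_neg, mulVec_add, mulVec_neg, neg_mulVec, mulVec_mulVec, Matrix.mul_assoc]

theorem inv_fromBlocks_replicateCol_replicateRow_one_mulVec_inl {ι : Type*} [Unique ι]
    [DecidableEq ι] (A : Matrix m m α) (v x : m → α) [Invertible (A - vecMulVec v v)]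
    (i : m) :
    ((fromBlocks A (replicateCol ι v) (replicateRow ι v) 1)⁻¹ *ᵥ Sum.elim x 1) (Sum.inl i) =
      ((A - vecMulVec v v)⁻¹ *ᵥ (x - v)) i := by
  let := invertibleOne (α := Matrix ι ι α)
  have hschur : A - replicateCol ι v * ⅟(1 : Matrix ι ι α) * replicateRow ι v =
      A - vecMulVec v v := by
    rw [invOf_one, Matrix.mul_one, vecMulVec_eq ι]
  let : Invertible (A - replicateCol ι v * ⅟(1 : Matrix ι ι α) * replicateRow ι v) :=
    hschur ▸ inferInstance
  rw [inv_fromBlocks₂₂_mulVec_inl, hschur, invOf_one, one_mulVec]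
  congr
  ext j
  simp [mulVec, dotProduct]

end Matrix

theorem acem_equiv_mf_general {L : ℕ} (R : Matrix (Fin L) (Fin L) ℝ)
    (m d : Fin L → ℝ)
    (hK : IsUnit (R - vecMulVec m m).det)
    (hMFden : (d - m) ⬝ᵥ (R - vecMulVec m m)⁻¹ *ᵥ (d - m) ≠ 0) :
    (fun i : Fin L =>
        ((Sum.elim d 1 ⬝ᵥ
            (fromBlocks R (fun i (_ : Fin 1) => m i) (fun (_ : Fin 1) j => m j) 1)⁻¹ *ᵥ
            Sum.elim d 1)⁻¹ •
          ((fromBlocks R (fun i (_ : Fin 1) => m i) (fun (_ : Fin 1) j => m j) 1)⁻¹ *ᵥ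
            Sum.elim d 1)) (Sum.inl i)) =
      ((Sum.elim d 1 ⬝ᵥ
          (fromBlocks R (fun i (_ : Fin 1) => m i) (fun (_ : Fin 1) j => m j) 1)⁻¹ *ᵥ
          Sum.elim d 1)⁻¹ /
        ((d - m) ⬝ᵥ (R - vecMulVec m m)⁻¹ *ᵥ (d - m))⁻¹) •
        (((d - m) ⬝ᵥ (R - vecMulVec m m)⁻¹ *ᵥ (d - m))⁻¹ •
          ((R - vecMulVec m m)⁻¹ *ᵥ (d - m))) := by
  let := (R - vecMulVec m m).invertibleOfIsUnitDet hK
  funext i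
  -- the blocks `fun i _ => m i` and `fun _ j => m j` are `replicateCol` / `replicateRow` only up to unfolding
  erw [Pi.smul_apply, inv_fromBlocks_replicateCol_replicateRow_one_mulVec_inl (ι := Fin 1) R m d i]
  rw [smul_smul, div_mul_cancel₀ _ (inv_ne_zero hMFden), Pi.smul_apply]

theorem acem_equiv_mf {L : ℕ} (R : Matrix (Fin L) (Fin L) ℝ)
    (m d : Fin L → ℝ) (hR : R.PosDef)
    (h1 : 1 - m ⬝ᵥ R⁻¹ *ᵥ m ≠ 0)
    (hK : IsUnit (R - vecMulVec m m).det)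
    (hMFden : (d - m) ⬝ᵥ (R - vecMulVec m m)⁻¹ *ᵥ (d - m) ≠ 0)
    (hACEMden :
      Sum.elim d 1 ⬝ᵥ
        (fromBlocks R (fun i (_ : Fin 1) => m i) (fun (_ : Fin 1) j => m j) 1)⁻¹ *ᵥ
        Sum.elim d 1 ≠ 0) :
    (fun i : Fin L =>
        ((Sum.elim d 1 ⬝ᵥ
            (fromBlocks R (fun i (_ : Fin 1) => m i) (fun (_ : Fin 1) j => m j) 1)⁻¹ *ᵥ
            Sum.elim d 1)⁻¹ •
          ((fromBlocks R (fun i (_ : Fin 1) => m i) (fun (_ : Fin 1) j => m j) 1)⁻¹ *ᵥ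
            Sum.elim d 1)) (Sum.inl i)) =
      ((Sum.elim d 1 ⬝ᵥ
          (fromBlocks R (fun i (_ : Fin 1) => m i) (fun (_ : Fin 1) j => m j) 1)⁻¹ *ᵥ
          Sum.elim d 1)⁻¹ /
        ((d - m) ⬝ᵥ (R - vecMulVec m m)⁻¹ *ᵥ (d - m))⁻¹) •
        (((d - m) ⬝ᵥ (R - vecMulVec m m)⁻¹ *ᵥ (d - m))⁻¹ •
          ((R - vecMulVec m m)⁻¹ *ᵥ (d - m))) :=
  acem_equiv_mf_general R m d hK hMFden
end

section
/- Under the assumptions of Theorem 2, let K = R - m mᵀ, d̃ = (d,1), and R̃ = [[R,m],[mᵀ,1]]; then the unnormalized directions agree exactly: (R̃⁻¹d̃)(1:L) = K⁻¹(d - m). -/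
open Matrix

theorem acem_mf_unnormalized {L : ℕ} (R : Matrix (Fin L) (Fin L) ℝ)
    (m d : Fin L → ℝ) (hR : R.PosDef)
    (h1 : 1 - m ⬝ᵥ R⁻¹ *ᵥ m ≠ 0)
    (hK : IsUnit (R - vecMulVec m m).det) :
    (fun i : Fin L =>
        ((fromBlocks R (fun i (_ : Fin 1) => m i) (fun (_ : Fin 1) j => m j) 1)⁻¹ *ᵥ
          Sum.elim d 1) (Sum.inl i)) =
      (R - vecMulVec m m)⁻¹ *ᵥ (d - m) := by
  set K := R - vecMulVec m m with hKdef
  set B := fromBlocks R (fun i (_ : Fin 1) => m i) (fun (_ : Fin 1) j => m j) (1 : Matrix (Fin 1) (Fin 1) ℝ) with hBdef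
  have hBdet : IsUnit B.det := by
    rw [hBdef]
    erw [det_fromBlocks_one₂₂]
    convert hK using 2
    ext i j
    simp [Matrix.mul_apply, hKdef, vecMulVec_apply]
    erw [Matrix.mul_apply]
    simp
  set x₁ := K⁻¹ *ᵥ (d - m) with hx₁
  have hKx : K *ᵥ x₁ = d - m := by
    rw [hx₁, mulVec_mulVec, Matrix.mul_nonsing_inv _ hK, one_mulVec]
  set c : ℝ := 1 - m ⬝ᵥ x₁ with hc
  have h2 : R *ᵥ x₁ - (m ⬝ᵥ x₁) • m = d - m := by
    rw [← hKx, hKdef, sub_mulVec]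
    congr 1
    ext i
    simp [vecMulVec_apply, mulVec, dotProduct, Finset.mul_sum, Finset.sum_mul, mul_assoc,
      mul_comm, mul_left_comm]
  have hsolve : B *ᵥ Sum.elim x₁ (fun _ => c) = Sum.elim d 1 := by
    funext p
    rcases p with i | i
    · have h2i := congrFun h2 i
      simp only [Pi.sub_apply, Pi.smul_apply, smul_eq_mul] at h2i
      have hR1 : R.mulVec x₁ i = ∑ j, R i j * x₁ j := rfl
      simp only [hBdef, mulVec, dotProduct, Fintype.sum_sum_type, Sum.elim_inl, Sum.elim_inr,
        fromBlocks_apply₁₁, fromBlocks_apply₁₂, Fin.sum_univ_one, fromBlocks, of_apply]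
      rw [← hR1] at *
      simp only [hc]
      linarith
    · have hd1 : m ⬝ᵥ x₁ = ∑ j, m j * x₁ j := rfl
      simp only [hBdef, mulVec, dotProduct, Fintype.sum_sum_type, Sum.elim_inl, Sum.elim_inr,
        fromBlocks_apply₂₁, fromBlocks_apply₂₂, Fin.sum_univ_one, one_apply_eq, fromBlocks, of_apply]
      rw [← hd1, hc]
      have h1i : (1 : Matrix (Fin 1) (Fin 1) ℝ) i 0 = 1 := by
        rw [Subsingleton.elim i 0]; simp
      rw [h1i]
      simp
  have key : B⁻¹ *ᵥ Sum.elim d 1 = Sum.elim x₁ (fun _ => c) := by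
    rw [← hsolve, mulVec_mulVec, Matrix.nonsing_inv_mul _ hBdet, one_mulVec]
  funext i
  rw [key]
  simp [hx₁]
end

section
/- d̃ᵀR̃⁻¹d̃ = dᵀR⁻¹d + b₁(b₂ - 1)² where b₁ = 1/(1 - mᵀR⁻¹m) and b₂ = mᵀR⁻¹d. -/
/-!
Write the bordered matrix as a block matrix `[[R, m], [mᵀ, 1]]`. Its inverse is given by the
Schur complement formula, the Schur complement of `R` being the `1 × 1` matrix
`1 - mᵀR⁻¹m = b₁⁻¹`. Expanding the quadratic form blockwise gives
`dᵀR⁻¹d + b₁ (dᵀR⁻¹m - 1)(mᵀR⁻¹d - 1)`, and the symmetry of `R⁻¹` makes the last two factors equal.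
-/

open Matrix

namespace Matrix

variable {α m n : Type*} [Fintype m] [Fintype n] [DecidableEq m] [DecidableEq n]

theorem sumElim_dotProduct_inv_fromBlocks_mulVec_sumElim [CommRing α] {A : Matrix m m α}
    {B : Matrix m n α} {C : Matrix n m α} {D : Matrix n n α}
    (hA : IsUnit A.det) (hS : IsUnit (D - C * A⁻¹ * B).det) (x x' : m → α) (y y' : n → α) :
    Sum.elim x y ⬝ᵥ (fromBlocks A B C D)⁻¹ *ᵥ Sum.elim x' y' =
      x ⬝ᵥ A⁻¹ *ᵥ x' +
        (x ᵥ* (A⁻¹ * B) - y) ⬝ᵥ (D - C * A⁻¹ * B)⁻¹ *ᵥ ((C * A⁻¹) *ᵥ x' - y') := by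
  let := A.invertibleOfIsUnitDet hA
  let := (D - C * ⅟A * B).invertibleOfIsUnitDet (by rwa [invOf_eq_nonsing_inv])
  let := fromBlocks₁₁Invertible A B C D
  rw [← invOf_eq_nonsing_inv (fromBlocks A B C D), invOf_fromBlocks₁₁_eq, fromBlocks_mulVec,
    sumElim_dotProduct_sumElim]
  simp only [invOf_eq_nonsing_inv, Sum.elim_comp_inl, Sum.elim_comp_inr, add_mulVec, neg_mulVec,
    ← mulVec_mulVec, dotProduct_add, dotProduct_neg, sub_dotProduct, dotProduct_sub, mulVec_sub]
  simp only [dotProduct_mulVec, vecMul_vecMul, Matrix.mul_assoc]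
  abel

theorem dotProduct_inv_mulVec_of_unique [Field α] [Unique n] (S : Matrix n n α) (y y' : n → α) :
    y ⬝ᵥ S⁻¹ *ᵥ y' = (S default default)⁻¹ * y default * y' default := by
  simp only [inv_subsingleton, Ring.inverse_eq_inv, mulVec_diagonal, dotProduct,
    Finset.univ_unique, Finset.sum_singleton]
  ring

theorem sumElim_dotProduct_inv_fromBlocks_replicate_mulVec_sumElim [Field α] [Unique n]
    {A : Matrix m m α} (u v : m → α) (hA : IsUnit A.det) (hs : 1 - v ⬝ᵥ A⁻¹ *ᵥ u ≠ 0)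
    (x x' : m → α) (a a' : α) :
    Sum.elim x (fun _ : n => a) ⬝ᵥ
        (fromBlocks A (replicateCol n u) (replicateRow n v) 1)⁻¹ *ᵥ Sum.elim x' (fun _ => a') =
      x ⬝ᵥ A⁻¹ *ᵥ x' +
        (1 - v ⬝ᵥ A⁻¹ *ᵥ u)⁻¹ * (x ⬝ᵥ A⁻¹ *ᵥ u - a) * (v ⬝ᵥ A⁻¹ *ᵥ x' - a') := by
  have hschur : (1 - replicateRow n v * A⁻¹ * replicateCol n u : Matrix n n α) default default =
      1 - v ⬝ᵥ A⁻¹ *ᵥ u := by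
    rw [sub_apply, one_apply_eq, ← replicateRow_vecMul, replicateRow_mul_replicateCol_apply,
      dotProduct_mulVec]
  rw [sumElim_dotProduct_inv_fromBlocks_mulVec_sumElim hA
      (by rwa [det_unique, hschur, isUnit_iff_ne_zero]),
    dotProduct_inv_mulVec_of_unique (n := n), hschur, ← replicateCol_mulVec,
    ← replicateRow_vecMul, mulVec_replicateCol_eq_const, replicateRow_mulVec_eq_const,
    ← dotProduct_mulVec]
  rfl

end Matrix

theorem acem_denominator_formula {L : ℕ} (R : Matrix (Fin L) (Fin L) ℝ)
    (m d : Fin L → ℝ) (hR : R.IsSymm) (hRinv : IsUnit R.det)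
    (h1 : 1 - m ⬝ᵥ R⁻¹ *ᵥ m ≠ 0) :
    Sum.elim d 1 ⬝ᵥ
        (fromBlocks R (fun i (_ : Fin 1) => m i) (fun (_ : Fin 1) j => m j) 1)⁻¹ *ᵥ
        Sum.elim d 1 =
      d ⬝ᵥ R⁻¹ *ᵥ d +
        (1 - m ⬝ᵥ R⁻¹ *ᵥ m)⁻¹ * (m ⬝ᵥ R⁻¹ *ᵥ d - 1) ^ 2 := by
  have hsymm : d ⬝ᵥ R⁻¹ *ᵥ m = m ⬝ᵥ R⁻¹ *ᵥ d := by
    rw [dotProduct_mulVec, ← mulVec_transpose, hR.inv.eq, dotProduct_comm]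
  have h := sumElim_dotProduct_inv_fromBlocks_replicate_mulVec_sumElim (n := Fin 1) m m hRinv h1
    d d 1 1
  rwa [hsymm, mul_assoc, ← sq] at h
end
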